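/- Let (H, β) be a finite dimensional Hom-Hopf algebra with β bijective, M a linear space and ζ_M : M → M bijective. Then left (H^{*op} ⊗ H^*)-module structures on (M, ζ_M) are in bijection with pairs of a left H-comodule structure ρ^l and a right H-comodule structure ρ^r on (M, ζ_M) satisfying the bicomodule condition β(m_{[-1]}) ⊗ ρ^r(m_{[0]}) = ρ^l(m_{(0)}) ⊗ β(m_{(1)}); the module structure is recovered as (x ⊗ y)·m = ⟨x, m_{[-1]}⟩⟨y, β^{-1}(m_{[0](1)})⟩ζ_M^{-1}(m_{[0](0)}). -/

import Mathlib

open TensorProduct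

namespace HomHopf

variable (k : Type) [Field k]

/-- A Hom-algebra. -/
structure HomAlg (A : Type) [AddCommGroup A] [Module k A] : Type where
  mul : A →ₗ[k] A →ₗ[k] A
  one : A
  zmap : A →ₗ[k] A
  zmap_mul : ∀ a b, zmap (mul a b) = mul (zmap a) (zmap b)
  hom_assoc : ∀ a b c, mul (zmap a) (mul b c) = mul (mul a b) (zmap c)
  zmap_one : zmap one = one
  one_mul : ∀ a, mul one a = zmap a
  mul_one : ∀ a, mul a one = zmap a

/-- A Hom-bialgebra. -/
structure Bialg (H : Type) [AddCommGroup H] [Module k H] : Type where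
  mul : H →ₗ[k] H →ₗ[k] H
  one : H
  comul : H →ₗ[k] H ⊗[k] H
  counit : H →ₗ[k] k
  bmap : H →ₗ[k] H
  bmap_mul : ∀ a b, bmap (mul a b) = mul (bmap a) (bmap b)
  hom_assoc : ∀ a b c, mul (bmap a) (mul b c) = mul (mul a b) (bmap c)
  bmap_one : bmap one = one
  one_mul : ∀ a, mul one a = bmap a
  mul_one : ∀ a, mul a one = bmap a
  comul_bmap : ∀ c, comul (bmap c) = TensorProduct.map bmap bmap (comul c)
  coassoc : ∀ c, TensorProduct.map bmap comul (comul c)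
      = TensorProduct.assoc k H H H (TensorProduct.map comul bmap (comul c))
  counit_bmap : ∀ c, counit (bmap c) = counit c
  counit_comul : ∀ c,
      TensorProduct.lid k H (TensorProduct.map counit LinearMap.id (comul c)) = bmap c
  comul_counit : ∀ c,
      TensorProduct.rid k H (TensorProduct.map LinearMap.id counit (comul c)) = bmap c
  comul_mul : ∀ a b, comul (mul a b) = TensorProduct.map₂ mul mul (comul a) (comul b)
  comul_one : comul one = one ⊗ₜ[k] one
  counit_mul : ∀ a b, counit (mul a b) = counit a * counit b
  counit_one : counit one = 1

/-- A Hom-Hopf algebra. -/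
structure Hopf (H : Type) [AddCommGroup H] [Module k H] extends Bialg k H where
  S : H →ₗ[k] H
  S_mul_id : ∀ h,
      TensorProduct.lift mul (TensorProduct.map S LinearMap.id (comul h)) = counit h • one
  id_mul_S : ∀ h,
      TensorProduct.lift mul (TensorProduct.map LinearMap.id S (comul h)) = counit h • one
  S_bmap : ∀ h, S (bmap h) = bmap (S h)

variable {H : Type} [AddCommGroup H] [Module k H]
variable {M N P V W U : Type}
  [AddCommGroup M] [Module k M] [AddCommGroup N] [Module k N]
  [AddCommGroup P] [Module k P] [AddCommGroup V] [Module k V]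
  [AddCommGroup W] [Module k W] [AddCommGroup U] [Module k U]

/-- Left Hom-module. -/
structure IsLMod (A : Bialg k H) (ζ : M →ₗ[k] M) (act : H →ₗ[k] M →ₗ[k] M) : Prop where
  assoc : ∀ a b m, act (A.bmap a) (act b m) = act (A.mul a b) (ζ m)
  zeta_act : ∀ a m, ζ (act a m) = act (A.bmap a) (ζ m)
  one_act : ∀ m, act A.one m = ζ m

/-- Right Hom-module. -/
structure IsRMod (A : Bialg k H) (ζ : M →ₗ[k] M) (ract : M →ₗ[k] H →ₗ[k] M) : Prop where
  assoc : ∀ m a b, ract (ract m a) (A.bmap b) = ract (ζ m) (A.mul a b)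
  zeta_act : ∀ m a, ζ (ract m a) = ract (ζ m) (A.bmap a)
  act_one : ∀ m, ract m A.one = ζ m

/-- Left Hom-module over a plain Hom-algebra structure (given by raw data). -/
structure IsLModOf {A : Type} [AddCommGroup A] [Module k A]
    (mul : A →ₗ[k] A →ₗ[k] A) (one : A) (zmap : A →ₗ[k] A)
    (ζ : M →ₗ[k] M) (act : A →ₗ[k] M →ₗ[k] M) : Prop where
  assoc : ∀ a b m, act (zmap a) (act b m) = act (mul a b) (ζ m)
  zeta_act : ∀ a m, ζ (act a m) = act (zmap a) (ζ m)
  one_act : ∀ m, act one m = ζ m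

/-- Right Hom-module over a plain Hom-algebra structure. -/
structure IsRModOf {A : Type} [AddCommGroup A] [Module k A]
    (mul : A →ₗ[k] A →ₗ[k] A) (one : A) (zmap : A →ₗ[k] A)
    (ζ : M →ₗ[k] M) (ract : M →ₗ[k] A →ₗ[k] M) : Prop where
  assoc : ∀ m a b, ract (ract m a) (zmap b) = ract (ζ m) (mul a b)
  zeta_act : ∀ m a, ζ (ract m a) = ract (ζ m) (zmap a)
  act_one : ∀ m, ract m one = ζ m

/-- Left Hom-comodule. -/
structure IsLCom (A : Bialg k H) (ζ : M →ₗ[k] M) (ρ : M →ₗ[k] H ⊗[k] M) : Prop where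
  coact_zeta : ∀ m, ρ (ζ m) = TensorProduct.map A.bmap ζ (ρ m)
  counit_coact : ∀ m, TensorProduct.lid k M (TensorProduct.map A.counit LinearMap.id (ρ m)) = ζ m
  coassoc : ∀ m, TensorProduct.map A.bmap ρ (ρ m)
      = TensorProduct.assoc k H H M (TensorProduct.map A.comul ζ (ρ m))

/-- Right Hom-comodule. -/
structure IsRCom (A : Bialg k H) (ζ : M →ₗ[k] M) (ρ : M →ₗ[k] M ⊗[k] H) : Prop where
  coact_zeta : ∀ m, ρ (ζ m) = TensorProduct.map ζ A.bmap (ρ m)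
  coact_counit : ∀ m, TensorProduct.rid k M (TensorProduct.map LinearMap.id A.counit (ρ m)) = ζ m
  coassoc : ∀ m, TensorProduct.map ρ A.bmap (ρ m)
      = (TensorProduct.assoc k M H H).symm (TensorProduct.map ζ A.comul (ρ m))

/-- `(h·m)_{[-1]} ⊗ (h·m)_{[0]} = h_1 m_{[-1]} ⊗ h_2 · m_{[0]}`. -/
def LLcompat (A : Bialg k H) (act : H →ₗ[k] M →ₗ[k] M) (ρ : M →ₗ[k] H ⊗[k] M) : Prop :=
  ∀ h m, ρ (act h m) = TensorProduct.map₂ A.mul act (A.comul h) (ρ m)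

/-- `(h·m)_{(0)} ⊗ (h·m)_{(1)} = h_1 · m_{(0)} ⊗ h_2 m_{(1)}`. -/
def LRcompat (A : Bialg k H) (act : H →ₗ[k] M →ₗ[k] M) (ρ : M →ₗ[k] M ⊗[k] H) : Prop :=
  ∀ h m, ρ (act h m) = TensorProduct.map₂ act A.mul (A.comul h) (ρ m)

/-- `(m·h)_{[-1]} ⊗ (m·h)_{[0]} = m_{[-1]} h_1 ⊗ m_{[0]} · h_2`. -/
def RLcompat (A : Bialg k H) (ract : M →ₗ[k] H →ₗ[k] M) (ρ : M →ₗ[k] H ⊗[k] M) : Prop :=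
  ∀ m h, ρ (ract m h) = TensorProduct.map₂ A.mul ract (ρ m) (A.comul h)

/-- `(m·h)_{(0)} ⊗ (m·h)_{(1)} = m_{(0)} · h_1 ⊗ m_{(1)} h_2`. -/
def RRcompat (A : Bialg k H) (ract : M →ₗ[k] H →ₗ[k] M) (ρ : M →ₗ[k] M ⊗[k] H) : Prop :=
  ∀ m h, ρ (ract m h) = TensorProduct.map₂ ract A.mul (ρ m) (A.comul h)

/-- Four-angle H-Hopf module. -/
structure IsFourAngle (A : Hopf k H) (ζ : M →ₗ[k] M)
    (lact : H →ₗ[k] M →ₗ[k] M) (ract : M →ₗ[k] H →ₗ[k] M)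
    (ρl : M →ₗ[k] H ⊗[k] M) (ρr : M →ₗ[k] M ⊗[k] H) : Prop where
  lmod : IsLMod k A.toBialg ζ lact
  rmod : IsRMod k A.toBialg ζ ract
  bimod : ∀ a m b, lact (A.bmap a) (ract m b) = ract (lact a m) (A.bmap b)
  lcom : IsLCom k A.toBialg ζ ρl
  rcom : IsRCom k A.toBialg ζ ρr
  bicom : ∀ m, TensorProduct.map A.bmap ρr (ρl m)
      = TensorProduct.assoc k H M H (TensorProduct.map ρl A.bmap (ρr m))
  cll : LLcompat k A.toBialg lact ρl
  clr : LRcompat k A.toBialg lact ρr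
  crl : RLcompat k A.toBialg ract ρl
  crr : RRcompat k A.toBialg ract ρr

/-- Yetter–Drinfel'd compatibility, stated via arbitrary finite representations of `Δ(h)`. -/
def ydCompat (A : Bialg k H) (ract : V →ₗ[k] H →ₗ[k] V) (ρ : V →ₗ[k] V ⊗[k] H) : Prop :=
  ∀ (v : V) (h : H) (ι : Type) (s : Finset ι) (h1 h2 : ι → H),
    A.comul h = ∑ i ∈ s, h1 i ⊗ₜ[k] h2 i →
    ∑ i ∈ s, TensorProduct.map LinearMap.id (A.mul (A.bmap (A.bmap (h1 i))))
        (ρ (ract v (h2 i)))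
      = ∑ i ∈ s, TensorProduct.map (ract.flip (A.bmap (h1 i)))
          (((A.mul.flip (A.bmap (A.bmap (h2 i)))).comp A.bmap)) (ρ v)

/-- Right-right Yetter–Drinfel'd module. -/
structure IsYD (A : Hopf k H) (ζ : V →ₗ[k] V)
    (ract : V →ₗ[k] H →ₗ[k] V) (ρ : V →ₗ[k] V ⊗[k] H) : Prop where
  rmod : IsRMod k A.toBialg ζ ract
  rcom : IsRCom k A.toBialg ζ ρ
  compat : ydCompat k A.toBialg ract ρ

/-- The braiding `c_{V,W}(v ⊗ w) = ζ_W⁻¹(w_(0)) ⊗ ζ_V⁻¹(v) ◁ β⁻²(w_(1))`. -/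
noncomputable def braid (ract : V →ₗ[k] H →ₗ[k] V) (ζVinv : V →ₗ[k] V)
    (ρ : W →ₗ[k] W ⊗[k] H) (ζWinv : W →ₗ[k] W) (βinv : H →ₗ[k] H) :
    V ⊗[k] W →ₗ[k] W ⊗[k] V :=
  (TensorProduct.map LinearMap.id (TensorProduct.lift (ract.comp ζVinv))).comp
    ((TensorProduct.leftComm k V W H).toLinearMap.comp
      (TensorProduct.map LinearMap.id ((TensorProduct.map ζWinv (βinv.comp βinv)).comp ρ)))

/-- The action on the tensor product of two YD modules:
`(v ⊗ w) ◁ h = v ◁ β⁻¹(h_1) ⊗ w ◁ β⁻¹(h_2)`. -/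
noncomputable def ydAct (A : Bialg k H) (βinv : H →ₗ[k] H)
    (ractV : V →ₗ[k] H →ₗ[k] V) (ractW : W →ₗ[k] H →ₗ[k] W) :
    V ⊗[k] W →ₗ[k] H →ₗ[k] V ⊗[k] W :=
  (TensorProduct.map₂ ractV ractW).compl₂ ((TensorProduct.map βinv βinv).comp A.comul)

/-- The coaction on the tensor product of two YD modules:
`ρ(v ⊗ w) = v_(0) ⊗ w_(0) ⊗ β⁻¹(v_(1) w_(1))`. -/
noncomputable def ydCoact (A : Bialg k H) (βinv : H →ₗ[k] H)
    (ρV : V →ₗ[k] V ⊗[k] H) (ρW : W →ₗ[k] W ⊗[k] H) :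
    V ⊗[k] W →ₗ[k] (V ⊗[k] W) ⊗[k] H :=
  (TensorProduct.map LinearMap.id (βinv.comp (TensorProduct.lift A.mul))).comp
    ((TensorProduct.tensorTensorTensorComm k V H W H).toLinearMap.comp
      (TensorProduct.map ρV ρW))


/-- The multiplication of the dual Hom-Hopf algebra `H^*`:
`(x • y)(h) = x(β⁻²(h_1)) y(β⁻²(h_2))`. -/
noncomputable def dualMul (A : Hopf k H) (βinv : H →ₗ[k] H) :
    Module.Dual k H →ₗ[k] Module.Dual k H →ₗ[k] Module.Dual k H :=
  TensorProduct.curry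
    ((((TensorProduct.map (βinv.comp βinv) (βinv.comp βinv)).comp A.comul).dualMap).comp
      (TensorProduct.dualDistrib k H H))

/-- The recovery formula
`(x ⊗ y)·m = ⟨x, m_{[-1]}⟩ ⟨y, β⁻¹(m_{[0](1)})⟩ ζ_M⁻¹(m_{[0](0)})`. -/
noncomputable def dualActCond (βinv : H →ₗ[k] H) (ζMinv : M →ₗ[k] M)
    (act : (Module.Dual k H) ⊗[k] (Module.Dual k H) →ₗ[k] M →ₗ[k] M)
    (ρl : M →ₗ[k] H ⊗[k] M) (ρr : M →ₗ[k] M ⊗[k] H) : Prop :=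
  ∀ (x y : Module.Dual k H) (m : M),
    act (x ⊗ₜ[k] y) m
      = TensorProduct.rid k M
          (TensorProduct.map LinearMap.id (TensorProduct.dualDistrib k H H (x ⊗ₜ[k] y))
            (TensorProduct.leftComm k H M H
              (TensorProduct.map LinearMap.id (TensorProduct.map ζMinv βinv)
                (TensorProduct.map LinearMap.id ρr (ρl m)))))

/-!
Pairing with `H^*` turns a left comodule into the action `x ▷ m = ⟨x, m_{[-1]}⟩ m_{[0]}` and a
right comodule into `m ◁ y = ⟨y, m_{(1)}⟩ m_{(0)}`. As `H` is finite dimensional, a tensor in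
`H ⊗ M` is determined by its contractions with `H^*`, so the comodule axioms are equivalent to
Hom-module axioms for these actions over the convolution `(x ⋆ y)(h) = x(h_1) y(h_2)`, and the
bicomodule condition to their commutation. An `H^{*op} ⊗ H^*`-module restricts to the two
commuting actions of `x ⊗ ε` and `ε ⊗ y`, and is recovered from them as
`(x ⊗ y)·m = ζ⁻¹((ε ⊗ y∘β⁻¹)·(x ⊗ ε)·m)`, which is the pairing formula of the theorem.
-/

section Contraction

variable {k}
variable {E F X Y : Type} [AddCommGroup E] [Module k E] [AddCommGroup F] [Module k F]
  [AddCommGroup X] [Module k X] [AddCommGroup Y] [Module k Y]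

noncomputable def lcontr (x : Module.Dual k E) : E ⊗[k] X →ₗ[k] X :=
  TensorProduct.lid k X ∘ₗ x.rTensor X

noncomputable def rcontr (x : Module.Dual k E) : X ⊗[k] E →ₗ[k] X :=
  TensorProduct.rid k X ∘ₗ x.lTensor X

@[simp] lemma lcontr_tmul (x : Module.Dual k E) (a : E) (v : X) :
    lcontr x (a ⊗ₜ[k] v) = x a • v := by
  simp [lcontr]

@[simp] lemma rcontr_tmul (x : Module.Dual k E) (v : X) (a : E) :
    rcontr x (v ⊗ₜ[k] a) = x a • v := by
  simp [rcontr]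

lemma lcontr_map (x : Module.Dual k E) (f : F →ₗ[k] E) (g : X →ₗ[k] Y) (t : F ⊗[k] X) :
    lcontr x (TensorProduct.map f g t) = g (lcontr (x ∘ₗ f) t) := by
  induction t using TensorProduct.induction_on <;> simp_all

lemma rcontr_map (x : Module.Dual k E) (g : X →ₗ[k] Y) (f : F →ₗ[k] E) (t : X ⊗[k] F) :
    rcontr x (TensorProduct.map g f t) = g (rcontr (x ∘ₗ f) t) := by
  induction t using TensorProduct.induction_on <;> simp_all

lemma lcontr_assoc (x : Module.Dual k E) (t : (E ⊗[k] X) ⊗[k] Y) :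
    lcontr x (TensorProduct.assoc k E X Y t) = TensorProduct.map (lcontr x) LinearMap.id t := by
  induction t using TensorProduct.induction_on with
  | tmul u v => induction u using TensorProduct.induction_on <;> simp_all [add_tmul, smul_tmul']
  | _ => simp_all

lemma rcontr_assoc_symm (x : Module.Dual k E) (t : X ⊗[k] (Y ⊗[k] E)) :
    rcontr x ((TensorProduct.assoc k X Y E).symm t)
      = TensorProduct.map LinearMap.id (rcontr x) t := by
  induction t using TensorProduct.induction_on with
  | tmul v u => induction u using TensorProduct.induction_on <;> simp_all [tmul_add]
  | _ => simp_all

lemma apply_lcontr (x : Module.Dual k E) (y : Module.Dual k F) (t : E ⊗[k] F) :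
    y (lcontr x t) = TensorProduct.dualDistrib k E F (x ⊗ₜ y) t := by
  induction t using TensorProduct.induction_on <;> simp_all

lemma apply_rcontr (x : Module.Dual k E) (y : Module.Dual k F) (t : E ⊗[k] F) :
    x (rcontr y t) = TensorProduct.dualDistrib k E F (x ⊗ₜ y) t := by
  induction t using TensorProduct.induction_on <;> simp_all [mul_comm]

lemma dualDistrib_map {E' F' : Type} [AddCommGroup E'] [Module k E'] [AddCommGroup F']
    [Module k F'] (x : Module.Dual k E) (y : Module.Dual k F) (f : E' →ₗ[k] E) (g : F' →ₗ[k] F)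
    (t : E' ⊗[k] F') :
    TensorProduct.dualDistrib k E F (x ⊗ₜ y) (TensorProduct.map f g t)
      = TensorProduct.dualDistrib k E' F' ((x ∘ₗ f) ⊗ₜ (y ∘ₗ g)) t := by
  induction t using TensorProduct.induction_on <;> simp_all

lemma sum_tmul_lcontr_coord {ι : Type} [Fintype ι] (b : Module.Basis ι k E) (t : E ⊗[k] X) :
    ∑ i, b i ⊗ₜ[k] lcontr (b.coord i) t = t := by
  induction t using TensorProduct.induction_on with
  | tmul a v =>
    simp only [lcontr_tmul, tmul_smul, smul_tmul', ← TensorProduct.sum_tmul,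
      Module.Basis.coord_apply, Module.Basis.sum_repr]
  | _ => simp_all [tmul_add, Finset.sum_add_distrib]

lemma sum_rcontr_coord_tmul {ι : Type} [Fintype ι] (b : Module.Basis ι k E) (t : X ⊗[k] E) :
    ∑ i, rcontr (b.coord i) t ⊗ₜ[k] b i = t := by
  induction t using TensorProduct.induction_on with
  | tmul v a =>
    simp only [rcontr_tmul, smul_tmul, ← TensorProduct.tmul_sum, Module.Basis.coord_apply,
      Module.Basis.sum_repr]
  | _ => simp_all [add_tmul, Finset.sum_add_distrib]

variable [FiniteDimensional k E]

lemma ext_lcontr {t t' : E ⊗[k] X} (h : ∀ x : Module.Dual k E, lcontr x t = lcontr x t') :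
    t = t' := by
  let b := Module.Free.chooseBasis k E
  rw [← sum_tmul_lcontr_coord b t, ← sum_tmul_lcontr_coord b t']
  simp only [h]

lemma ext_rcontr {t t' : X ⊗[k] E} (h : ∀ x : Module.Dual k E, rcontr x t = rcontr x t') :
    t = t' := by
  let b := Module.Free.chooseBasis k E
  rw [← sum_rcontr_coord_tmul b t, ← sum_rcontr_coord_tmul b t']
  simp only [h]

lemma exists_lcontr_eq (T : Module.Dual k E →ₗ[k] X →ₗ[k] Y) :
    ∃ ρ : X →ₗ[k] E ⊗[k] Y, ∀ x v, lcontr x (ρ v) = T x v := by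
  let b := Module.Free.chooseBasis k E
  refine ⟨∑ i, TensorProduct.mk k E Y (b i) ∘ₗ T (b.coord i), fun x v => ?_⟩
  conv_rhs => rw [← b.sum_dual_apply_smul_coord x]
  simp [-Module.Basis.sum_dual_apply_smul_coord]

lemma exists_rcontr_eq (T : Module.Dual k E →ₗ[k] X →ₗ[k] Y) :
    ∃ ρ : X →ₗ[k] Y ⊗[k] E, ∀ x v, rcontr x (ρ v) = T x v := by
  let b := Module.Free.chooseBasis k E
  refine ⟨∑ i, (TensorProduct.mk k Y E).flip (b i) ∘ₗ T (b.coord i), fun x v => ?_⟩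
  conv_rhs => rw [← b.sum_dual_apply_smul_coord x]
  simp [-Module.Basis.sum_dual_apply_smul_coord]

end Contraction

section Convolution

variable {k}
variable (A : Bialg k H)

noncomputable def dualConv (x y : Module.Dual k H) : Module.Dual k H :=
  TensorProduct.dualDistrib k H H (x ⊗ₜ y) ∘ₗ A.comul

lemma dualConv_apply (x y : Module.Dual k H) (h : H) :
    dualConv A x y h = TensorProduct.dualDistrib k H H (x ⊗ₜ y) (A.comul h) := rfl

lemma dualConv_comp_bmap (x y : Module.Dual k H) :
    dualConv A x y ∘ₗ A.bmap = dualConv A (x ∘ₗ A.bmap) (y ∘ₗ A.bmap) := by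
  ext h
  simp only [LinearMap.comp_apply, dualConv_apply, A.comul_bmap, dualDistrib_map]

lemma comp_lcontr_comul (x y : Module.Dual k H) :
    y ∘ₗ lcontr x ∘ₗ A.comul = dualConv A x y := by
  ext h
  exact apply_lcontr x y (A.comul h)

lemma comp_rcontr_comul (x y : Module.Dual k H) :
    x ∘ₗ rcontr y ∘ₗ A.comul = dualConv A x y := by
  ext h
  exact apply_rcontr x y (A.comul h)

lemma dualConv_counit_left (y : Module.Dual k H) : dualConv A A.counit y = y ∘ₗ A.bmap := by
  ext h
  exact (apply_lcontr A.counit y (A.comul h)).symm.trans (congrArg y (A.counit_comul h))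

lemma dualConv_counit_right (x : Module.Dual k H) : dualConv A x A.counit = x ∘ₗ A.bmap := by
  ext h
  exact (apply_rcontr x A.counit (A.comul h)).symm.trans (congrArg x (A.comul_counit h))

end Convolution

section BmapInverse

variable {k}
variable (A : Bialg k H) (βe : H ≃ₗ[k] H) (hβ : βe.toLinearMap = A.bmap)
include hβ

lemma comp_symm_comp_bmap (x : Module.Dual k H) :
    (x ∘ₗ βe.symm.toLinearMap) ∘ₗ A.bmap = x := by
  ext h
  simp [← hβ]

lemma comp_bmap_comp_symm (x : Module.Dual k H) :
    (x ∘ₗ A.bmap) ∘ₗ βe.symm.toLinearMap = x := by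
  ext h
  simp [← hβ]

lemma counit_comp_symm : A.counit ∘ₗ βe.symm.toLinearMap = A.counit := by
  ext h
  rw [LinearMap.comp_apply, ← A.counit_bmap, ← hβ]
  simp

lemma counit_comp_symm_comp_symm :
    A.counit ∘ₗ βe.symm.toLinearMap ∘ₗ βe.symm.toLinearMap = A.counit := by
  rw [← LinearMap.comp_assoc, counit_comp_symm A βe hβ, counit_comp_symm A βe hβ]

end BmapInverse

section DualMul

variable {k}
variable (A : Hopf k H)

lemma dualMul_eq_dualConv (βinv : H →ₗ[k] H) (x y : Module.Dual k H) :
    dualMul k A βinv x y = dualConv A.toBialg (x ∘ₗ βinv ∘ₗ βinv) (y ∘ₗ βinv ∘ₗ βinv) := by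
  ext h
  simp [dualMul, dualConv_apply, dualDistrib_map]

variable (βe : H ≃ₗ[k] H) (hβ : βe.toLinearMap = A.bmap)
include hβ

lemma dualMul_counit_left (y : Module.Dual k H) :
    dualMul k A βe.symm.toLinearMap A.counit y = y ∘ₗ βe.symm.toLinearMap := by
  rw [dualMul_eq_dualConv, counit_comp_symm_comp_symm A.toBialg βe hβ, dualConv_counit_left,
    LinearMap.comp_assoc, LinearMap.comp_assoc, ← hβ, LinearEquiv.symm_comp, LinearMap.comp_id]

lemma dualMul_counit_right (x : Module.Dual k H) :
    dualMul k A βe.symm.toLinearMap x A.counit = x ∘ₗ βe.symm.toLinearMap := by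
  rw [dualMul_eq_dualConv, counit_comp_symm_comp_symm A.toBialg βe hβ, dualConv_counit_right,
    LinearMap.comp_assoc, LinearMap.comp_assoc, ← hβ, LinearEquiv.symm_comp, LinearMap.comp_id]

lemma dualMul_comp_bmap (x y : Module.Dual k H) :
    dualMul k A βe.symm.toLinearMap x y ∘ₗ A.bmap
      = dualConv A.toBialg (x ∘ₗ βe.symm.toLinearMap) (y ∘ₗ βe.symm.toLinearMap) := by
  rw [dualMul_eq_dualConv, dualConv_comp_bmap]
  congr 1 <;> ext h <;> simp [← hβ]

lemma dualMul_comp_bmap_comp_bmap (x y : Module.Dual k H) :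
    dualMul k A βe.symm.toLinearMap (x ∘ₗ A.bmap) (y ∘ₗ A.bmap)
      = dualConv A.toBialg x y ∘ₗ βe.symm.toLinearMap := by
  rw [← comp_bmap_comp_symm A.toBialg βe hβ (dualMul k A _ _ _), dualMul_comp_bmap A βe hβ,
    comp_bmap_comp_symm A.toBialg βe hβ, comp_bmap_comp_symm A.toBialg βe hβ]

end DualMul

section Comodule

variable {k}
variable (A : Bialg k H) (ζ : M →ₗ[k] M)

structure IsDualLAct (L : Module.Dual k H → M → M) : Prop where
  zeta : ∀ x m, L x (ζ m) = ζ (L (x ∘ₗ A.bmap) m)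
  counit : ∀ m, L A.counit m = ζ m
  mul : ∀ x y m, L y (L (x ∘ₗ A.bmap) m) = ζ (L (dualConv A x y) m)

structure IsDualRAct (R : Module.Dual k H → M → M) : Prop where
  zeta : ∀ y m, R y (ζ m) = ζ (R (y ∘ₗ A.bmap) m)
  counit : ∀ m, R A.counit m = ζ m
  mul : ∀ y z m, R y (R (z ∘ₗ A.bmap) m) = ζ (R (dualConv A y z) m)

lemma lcontr_lcontr_assoc_map_comul (x y : Module.Dual k H) (t : H ⊗[k] M) :
    lcontr y (lcontr x (TensorProduct.assoc k H H M (TensorProduct.map A.comul ζ t)))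
      = ζ (lcontr (dualConv A x y) t) := by
  rw [lcontr_assoc, TensorProduct.map_map, LinearMap.id_comp, lcontr_map, comp_lcontr_comul]

lemma rcontr_rcontr_assoc_symm_map_comul (y z : Module.Dual k H) (t : M ⊗[k] H) :
    rcontr y (rcontr z ((TensorProduct.assoc k M H H).symm (TensorProduct.map ζ A.comul t)))
      = ζ (rcontr (dualConv A y z) t) := by
  rw [rcontr_assoc_symm, TensorProduct.map_map, LinearMap.id_comp, rcontr_map, comp_rcontr_comul]

variable [FiniteDimensional k H]

lemma isLCom_iff (ρ : M →ₗ[k] H ⊗[k] M) :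
    IsLCom k A ζ ρ ↔ IsDualLAct A ζ (fun x m => lcontr x (ρ m)) := by
  constructor
  · intro h
    refine ⟨fun x m => by rw [h.coact_zeta, lcontr_map], h.counit_coact, fun x y m => ?_⟩
    rw [← lcontr_map, h.coassoc, lcontr_lcontr_assoc_map_comul]
  · intro h
    refine ⟨fun m => ext_lcontr fun x => ?_, h.counit,
      fun m => ext_lcontr fun x => ext_lcontr fun y => ?_⟩
    · rw [lcontr_map]
      exact h.zeta x m
    · rw [lcontr_map, lcontr_lcontr_assoc_map_comul]
      exact h.mul x y m

lemma isRCom_iff (ρ : M →ₗ[k] M ⊗[k] H) :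
    IsRCom k A ζ ρ ↔ IsDualRAct A ζ (fun y m => rcontr y (ρ m)) := by
  constructor
  · intro h
    refine ⟨fun y m => by rw [h.coact_zeta, rcontr_map], h.coact_counit, fun y z m => ?_⟩
    rw [← rcontr_map, h.coassoc, rcontr_rcontr_assoc_symm_map_comul]
  · intro h
    refine ⟨fun m => ext_rcontr fun y => ?_, h.counit,
      fun m => ext_rcontr fun z => ext_rcontr fun y => ?_⟩
    · rw [rcontr_map]
      exact h.zeta y m
    · rw [rcontr_map, rcontr_rcontr_assoc_symm_map_comul]
      exact h.mul y z m

lemma bicomod_compat_iff (ρl : M →ₗ[k] H ⊗[k] M) (ρr : M →ₗ[k] M ⊗[k] H) :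
    (∀ m, TensorProduct.map A.bmap ρr (ρl m)
        = TensorProduct.assoc k H M H (TensorProduct.map ρl A.bmap (ρr m))) ↔
      ∀ x y m, rcontr y (ρr (lcontr (x ∘ₗ A.bmap) (ρl m)))
        = lcontr x (ρl (rcontr (y ∘ₗ A.bmap) (ρr m))) := by
  have hcontr : ∀ x y m, rcontr y (lcontr x
      (TensorProduct.assoc k H M H (TensorProduct.map ρl A.bmap (ρr m))))
        = lcontr x (ρl (rcontr (y ∘ₗ A.bmap) (ρr m))) := by
    intro x y m
    rw [lcontr_assoc, TensorProduct.map_map, LinearMap.id_comp, rcontr_map, LinearMap.comp_apply]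
  constructor
  · intro h x y m
    rw [← lcontr_map, h, hcontr]
  · intro h m
    refine ext_lcontr fun x => ext_rcontr fun y => ?_
    rw [lcontr_map, hcontr]
    exact h x y m

end Comodule

section Recovery

variable {k}

lemma dualActCond_iff (βinv : H →ₗ[k] H) (ζinv : M →ₗ[k] M)
    (act : Module.Dual k H ⊗[k] Module.Dual k H →ₗ[k] M →ₗ[k] M)
    (ρl : M →ₗ[k] H ⊗[k] M) (ρr : M →ₗ[k] M ⊗[k] H) :
    dualActCond k βinv ζinv act ρl ρr ↔
      ∀ x y m, act (x ⊗ₜ y) m = ζinv (rcontr (y ∘ₗ βinv) (ρr (lcontr x (ρl m)))) := by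
  have hcontr : ∀ (x y : Module.Dual k H) (t : H ⊗[k] (M ⊗[k] H)),
      TensorProduct.rid k M (TensorProduct.map LinearMap.id
          (TensorProduct.dualDistrib k H H (x ⊗ₜ[k] y)) (TensorProduct.leftComm k H M H
            (TensorProduct.map LinearMap.id (TensorProduct.map ζinv βinv) t)))
        = ζinv (rcontr (y ∘ₗ βinv) (lcontr x t)) := by
    intro x y t
    induction t using TensorProduct.induction_on with
    | tmul h w => induction w using TensorProduct.induction_on <;> simp_all [tmul_add, mul_smul]
    | _ => simp_all
  simp only [dualActCond, hcontr, lcontr_map, LinearMap.comp_id]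

/-- The right-hand side of `dualActCond`, assembled from linear maps so that it is linear in
`x ⊗ y`. -/
noncomputable def recoveredAct (βinv : H →ₗ[k] H) (ζinv : M →ₗ[k] M)
    (ρl : M →ₗ[k] H ⊗[k] M) (ρr : M →ₗ[k] M ⊗[k] H) :
    Module.Dual k H ⊗[k] Module.Dual k H →ₗ[k] M →ₗ[k] M :=
  ((LinearMap.lTensorHom M ∘ₗ TensorProduct.dualDistrib k H H).compr₂
      (TensorProduct.rid k M).toLinearMap).compl₂
    ((TensorProduct.leftComm k H M H).toLinearMap
      ∘ₗ TensorProduct.map LinearMap.id (TensorProduct.map ζinv βinv)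
      ∘ₗ TensorProduct.map LinearMap.id ρr ∘ₗ ρl)

lemma dualActCond_recoveredAct (βinv : H →ₗ[k] H) (ζinv : M →ₗ[k] M)
    (ρl : M →ₗ[k] H ⊗[k] M) (ρr : M →ₗ[k] M ⊗[k] H) :
    dualActCond k βinv ζinv (recoveredAct βinv ζinv ρl ρr) ρl ρr :=
  fun _ _ _ => rfl

end Recovery

section DualOpTensorMod

variable {k}
variable {A : Hopf k H} {βe : H ≃ₗ[k] H} {ζ : M ≃ₗ[k] M}

variable (A βe ζ) in
def IsDualOpTensorMod (act : Module.Dual k H ⊗[k] Module.Dual k H →ₗ[k] M →ₗ[k] M) : Prop :=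
  IsLModOf k
    (TensorProduct.map₂ (dualMul k A βe.symm.toLinearMap).flip (dualMul k A βe.symm.toLinearMap))
    (A.counit ⊗ₜ[k] A.counit)
    (TensorProduct.map βe.symm.toLinearMap.dualMap βe.symm.toLinearMap.dualMap)
    ζ.toLinearMap act

variable (hβ : βe.toLinearMap = A.bmap)
include hβ

lemma IsDualLAct.zeta_symm {L : Module.Dual k H → M → M}
    (hL : IsDualLAct A.toBialg ζ.toLinearMap L) (x : Module.Dual k H) (m : M) :
    L x (ζ.symm m) = ζ.symm (L (x ∘ₗ βe.symm.toLinearMap) m) := by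
  have h := hL.zeta (x ∘ₗ βe.symm.toLinearMap) (ζ.symm m)
  rw [comp_symm_comp_bmap A.toBialg βe hβ] at h
  simp only [LinearEquiv.coe_coe, LinearEquiv.apply_symm_apply] at h
  rw [h, LinearEquiv.symm_apply_apply]

lemma IsDualRAct.zeta_symm {R : Module.Dual k H → M → M}
    (hR : IsDualRAct A.toBialg ζ.toLinearMap R) (y : Module.Dual k H) (m : M) :
    R y (ζ.symm m) = ζ.symm (R (y ∘ₗ βe.symm.toLinearMap) m) := by
  have h := hR.zeta (y ∘ₗ βe.symm.toLinearMap) (ζ.symm m)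
  rw [comp_symm_comp_bmap A.toBialg βe hβ] at h
  simp only [LinearEquiv.coe_coe, LinearEquiv.apply_symm_apply] at h
  rw [h, LinearEquiv.symm_apply_apply]

variable {L R : Module.Dual k H → M → M}
  (hL : IsDualLAct A.toBialg ζ.toLinearMap L) (hR : IsDualRAct A.toBialg ζ.toLinearMap R)
  {act : Module.Dual k H ⊗[k] Module.Dual k H →ₗ[k] M →ₗ[k] M}
  (hact : ∀ x y m, act (x ⊗ₜ y) m = ζ.symm (R (y ∘ₗ βe.symm.toLinearMap) (L x m)))
include hR hact

lemma act_tmul_counit_of_recovery (x : Module.Dual k H) (m : M) :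
    act (x ⊗ₜ A.counit) m = L x m := by
  rw [hact, counit_comp_symm A.toBialg βe hβ, hR.counit, LinearEquiv.coe_coe,
    LinearEquiv.symm_apply_apply]

include hL

lemma act_counit_tmul_of_recovery (y : Module.Dual k H) (m : M) :
    act (A.counit ⊗ₜ y) m = R y m := by
  rw [hact, hL.counit, hR.zeta, comp_symm_comp_bmap A.toBialg βe hβ, LinearEquiv.coe_coe,
    LinearEquiv.symm_apply_apply]

variable (hcomm : ∀ x y m, R y (L (x ∘ₗ A.bmap) m) = L x (R (y ∘ₗ A.bmap) m))
include hcomm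

lemma recovery_assoc_tmul (x y x' y' : Module.Dual k H) (m : M) :
    act ((x ∘ₗ βe.symm.toLinearMap) ⊗ₜ (y ∘ₗ βe.symm.toLinearMap)) (act (x' ⊗ₜ y') m)
      = act (dualMul k A βe.symm.toLinearMap x' x ⊗ₜ dualMul k A βe.symm.toLinearMap y y')
          (ζ m) := by
  have cancel := comp_symm_comp_bmap A.toBialg βe hβ
  have hLζ : ∀ x m, L x (ζ m) = ζ (L (x ∘ₗ A.bmap) m) := hL.zeta
  have hRζ : ∀ y m, R y (ζ m) = ζ (R (y ∘ₗ A.bmap) m) := hR.zeta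
  have hLζ' := hL.zeta_symm hβ
  have hRζ' := hR.zeta_symm hβ
  set b := βe.symm.toLinearMap
  have hLL := hL.mul (x' ∘ₗ b) (x ∘ₗ b) m
  have hRR := hR.mul ((y ∘ₗ b) ∘ₗ b) ((y' ∘ₗ b) ∘ₗ b)
  have hLR := hcomm ((x ∘ₗ b) ∘ₗ b) ((y' ∘ₗ b) ∘ₗ b) (L x' m)
  simp only [cancel, LinearEquiv.coe_coe] at hLL hRR hLR
  -- Push every `ζ^{±1}` outwards; then `hLR` moves the middle right action past the left one,
  -- after which the two coassociativities `hLL` and `hRR` contract `L ∘ L` and `R ∘ R`.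
  rw [hact, hact, hact, hLζ, hRζ, cancel, dualMul_comp_bmap A βe hβ, dualMul_eq_dualConv,
    hLζ', hRζ', ← hLR, hLL, hRζ, hRζ, cancel, cancel, hRR]
  simp [LinearMap.comp_assoc, b]

lemma isDualOpTensorMod_of_recovery : IsDualOpTensorMod A βe ζ act := by
  have cancel := comp_symm_comp_bmap A.toBialg βe hβ
  have hLζ : ∀ x m, L x (ζ m) = ζ (L (x ∘ₗ A.bmap) m) := hL.zeta
  have hRζ : ∀ y m, R y (ζ m) = ζ (R (y ∘ₗ A.bmap) m) := hR.zeta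
  refine ⟨fun a b m => ?_, fun a m => ?_, fun m => ?_⟩
  · induction a using TensorProduct.induction_on with
    | tmul x y =>
      induction b using TensorProduct.induction_on with
      | tmul x' y' => exact recovery_assoc_tmul hβ hL hR hact hcomm x y x' y' m
      | zero => simp
      | add b₁ b₂ h₁ h₂ => simp only [map_add, LinearMap.add_apply, h₁, h₂]
    | zero => simp
    | add a₁ a₂ h₁ h₂ => simp only [map_add, LinearMap.add_apply, h₁, h₂]
  · induction a using TensorProduct.induction_on with
    | tmul x y =>
      simp only [TensorProduct.map_tmul, LinearMap.dualMap_apply', LinearEquiv.coe_coe, hact, hLζ,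
        hRζ, cancel, LinearEquiv.apply_symm_apply, LinearEquiv.symm_apply_apply]
    | zero => simp
    | add a₁ a₂ h₁ h₂ => simp only [map_add, LinearMap.add_apply, h₁, h₂]
  · rw [hact, counit_comp_symm A.toBialg βe hβ, hL.counit, hR.counit]
    simp

end DualOpTensorMod

namespace IsDualOpTensorMod

variable {k}
variable {A : Hopf k H} {βe : H ≃ₗ[k] H} {ζ : M ≃ₗ[k] M}
  {act : Module.Dual k H ⊗[k] Module.Dual k H →ₗ[k] M →ₗ[k] M}
  (hmod : IsDualOpTensorMod A βe ζ act)
include hmod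

lemma zeta_tmul (x y : Module.Dual k H) (m : M) :
    ζ (act (x ⊗ₜ y) m)
      = act ((x ∘ₗ βe.symm.toLinearMap) ⊗ₜ (y ∘ₗ βe.symm.toLinearMap)) (ζ m) :=
  hmod.zeta_act (x ⊗ₜ y) m

lemma assoc_tmul (x y x' y' : Module.Dual k H) (m : M) :
    act ((x ∘ₗ βe.symm.toLinearMap) ⊗ₜ (y ∘ₗ βe.symm.toLinearMap)) (act (x' ⊗ₜ y') m)
      = act (dualMul k A βe.symm.toLinearMap x' x ⊗ₜ dualMul k A βe.symm.toLinearMap y y')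
          (ζ m) :=
  hmod.assoc (x ⊗ₜ y) (x' ⊗ₜ y') m

variable (hβ : βe.toLinearMap = A.bmap)
include hβ

lemma counit_tmul_act_tmul_counit (x y : Module.Dual k H) (m : M) :
    act (A.counit ⊗ₜ y) (act (x ⊗ₜ A.counit) m)
      = act ((x ∘ₗ βe.symm.toLinearMap) ⊗ₜ y) (ζ m) := by
  have h := hmod.assoc_tmul A.counit (y ∘ₗ A.bmap) x A.counit m
  rwa [counit_comp_symm A.toBialg βe hβ, comp_bmap_comp_symm A.toBialg βe hβ,
    dualMul_counit_right A βe hβ, dualMul_counit_right A βe hβ,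
    comp_bmap_comp_symm A.toBialg βe hβ] at h

lemma tmul_counit_act_counit_tmul (x y : Module.Dual k H) (m : M) :
    act (x ⊗ₜ A.counit) (act (A.counit ⊗ₜ y) m)
      = act (x ⊗ₜ (y ∘ₗ βe.symm.toLinearMap)) (ζ m) := by
  have h := hmod.assoc_tmul (x ∘ₗ A.bmap) A.counit A.counit y m
  rwa [counit_comp_symm A.toBialg βe hβ, comp_bmap_comp_symm A.toBialg βe hβ,
    dualMul_counit_left A βe hβ, dualMul_counit_left A βe hβ,
    comp_bmap_comp_symm A.toBialg βe hβ] at h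

lemma isDualLAct : IsDualLAct A.toBialg ζ.toLinearMap (fun x m => act (x ⊗ₜ A.counit) m) where
  zeta x m := by
    rw [LinearEquiv.coe_coe, hmod.zeta_tmul, comp_bmap_comp_symm A.toBialg βe hβ,
      counit_comp_symm A.toBialg βe hβ]
  counit := hmod.one_act
  mul x y m := by
    have h := hmod.assoc_tmul (y ∘ₗ A.bmap) A.counit (x ∘ₗ A.bmap) A.counit m
    rw [comp_bmap_comp_symm A.toBialg βe hβ, counit_comp_symm A.toBialg βe hβ,
      dualMul_comp_bmap_comp_bmap A βe hβ, dualMul_counit_left A βe hβ,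
      counit_comp_symm A.toBialg βe hβ] at h
    rw [h, LinearEquiv.coe_coe, hmod.zeta_tmul, counit_comp_symm A.toBialg βe hβ]

lemma isDualRAct : IsDualRAct A.toBialg ζ.toLinearMap (fun y m => act (A.counit ⊗ₜ y) m) where
  zeta y m := by
    rw [LinearEquiv.coe_coe, hmod.zeta_tmul, comp_bmap_comp_symm A.toBialg βe hβ,
      counit_comp_symm A.toBialg βe hβ]
  counit := hmod.one_act
  mul y z m := by
    have h := hmod.assoc_tmul A.counit (y ∘ₗ A.bmap) A.counit (z ∘ₗ A.bmap) m
    rw [comp_bmap_comp_symm A.toBialg βe hβ, counit_comp_symm A.toBialg βe hβ,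
      dualMul_comp_bmap_comp_bmap A βe hβ, dualMul_counit_left A βe hβ,
      counit_comp_symm A.toBialg βe hβ] at h
    rw [h, LinearEquiv.coe_coe, hmod.zeta_tmul, counit_comp_symm A.toBialg βe hβ]

lemma comm (x y : Module.Dual k H) (m : M) :
    act (A.counit ⊗ₜ y) (act ((x ∘ₗ A.bmap) ⊗ₜ A.counit) m)
      = act (x ⊗ₜ A.counit) (act (A.counit ⊗ₜ (y ∘ₗ A.bmap)) m) := by
  rw [hmod.counit_tmul_act_tmul_counit hβ, hmod.tmul_counit_act_counit_tmul hβ,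
    comp_bmap_comp_symm A.toBialg βe hβ, comp_bmap_comp_symm A.toBialg βe hβ]

lemma recovery (x y : Module.Dual k H) (m : M) :
    act (x ⊗ₜ y) m
      = ζ.symm (act (A.counit ⊗ₜ (y ∘ₗ βe.symm.toLinearMap)) (act (x ⊗ₜ A.counit) m)) := by
  rw [hmod.counit_tmul_act_tmul_counit hβ, ← hmod.zeta_tmul, LinearEquiv.symm_apply_apply]

end IsDualOpTensorMod

section Correspondence

variable {k}
variable {A : Hopf k H} {βe : H ≃ₗ[k] H} {ζ : M ≃ₗ[k] M} (hβ : βe.toLinearMap = A.bmap)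
  [FiniteDimensional k H]
include hβ

lemma exists_bicomod_of_isDualOpTensorMod
    {act : Module.Dual k H ⊗[k] Module.Dual k H →ₗ[k] M →ₗ[k] M}
    (hmod : IsDualOpTensorMod A βe ζ act) :
    ∃ (ρl : M →ₗ[k] H ⊗[k] M) (ρr : M →ₗ[k] M ⊗[k] H),
      IsLCom k A.toBialg ζ.toLinearMap ρl ∧ IsRCom k A.toBialg ζ.toLinearMap ρr ∧
      (∀ m, TensorProduct.map A.bmap ρr (ρl m)
        = TensorProduct.assoc k H M H (TensorProduct.map ρl A.bmap (ρr m))) ∧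
      dualActCond k βe.symm.toLinearMap ζ.symm.toLinearMap act ρl ρr := by
  obtain ⟨ρl, hρl⟩ := exists_lcontr_eq (act ∘ₗ (TensorProduct.mk k _ _).flip A.counit)
  obtain ⟨ρr, hρr⟩ := exists_rcontr_eq (act ∘ₗ TensorProduct.mk k _ _ A.counit)
  simp only [LinearMap.comp_apply, LinearMap.flip_apply, TensorProduct.mk_apply] at hρl hρr
  refine ⟨ρl, ρr, (isLCom_iff _ _ _).2 ?_, (isRCom_iff _ _ _).2 ?_,
    (bicomod_compat_iff _ _ _).2 ?_, (dualActCond_iff _ _ _ _ _).2 ?_⟩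
  · simpa only [hρl] using hmod.isDualLAct hβ
  · simpa only [hρr] using hmod.isDualRAct hβ
  · simpa only [hρl, hρr] using hmod.comm hβ
  · simpa only [hρl, hρr, LinearEquiv.coe_coe] using hmod.recovery hβ

lemma isDualOpTensorMod_recoveredAct {ρl : M →ₗ[k] H ⊗[k] M} {ρr : M →ₗ[k] M ⊗[k] H}
    (hl : IsLCom k A.toBialg ζ.toLinearMap ρl) (hr : IsRCom k A.toBialg ζ.toLinearMap ρr)
    (hlr : ∀ m, TensorProduct.map A.bmap ρr (ρl m)
      = TensorProduct.assoc k H M H (TensorProduct.map ρl A.bmap (ρr m))) :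
    IsDualOpTensorMod A βe ζ (recoveredAct βe.symm.toLinearMap ζ.symm.toLinearMap ρl ρr) :=
  isDualOpTensorMod_of_recovery hβ ((isLCom_iff _ _ _).1 hl) ((isRCom_iff _ _ _).1 hr)
    ((dualActCond_iff _ _ _ _ _).1 (dualActCond_recoveredAct _ _ _ _))
    ((bicomod_compat_iff _ _ _).1 hlr)

lemma coacts_eq_of_dualActCond {act : Module.Dual k H ⊗[k] Module.Dual k H →ₗ[k] M →ₗ[k] M}
    {ρl ρl' : M →ₗ[k] H ⊗[k] M} {ρr ρr' : M →ₗ[k] M ⊗[k] H}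
    (hl : IsLCom k A.toBialg ζ.toLinearMap ρl) (hr : IsRCom k A.toBialg ζ.toLinearMap ρr)
    (hl' : IsLCom k A.toBialg ζ.toLinearMap ρl') (hr' : IsRCom k A.toBialg ζ.toLinearMap ρr')
    (hc : dualActCond k βe.symm.toLinearMap ζ.symm.toLinearMap act ρl ρr)
    (hc' : dualActCond k βe.symm.toLinearMap ζ.symm.toLinearMap act ρl' ρr') :
    ρl = ρl' ∧ ρr = ρr' := by
  have hL := (isLCom_iff _ _ _).1 hl
  have hR := (isRCom_iff _ _ _).1 hr
  have hL' := (isLCom_iff _ _ _).1 hl'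
  have hR' := (isRCom_iff _ _ _).1 hr'
  have hact := (dualActCond_iff _ _ _ _ _).1 hc
  have hact' := (dualActCond_iff _ _ _ _ _).1 hc'
  refine ⟨LinearMap.ext fun m => ext_lcontr fun x => ?_,
    LinearMap.ext fun m => ext_rcontr fun y => ?_⟩
  · rw [← act_tmul_counit_of_recovery hβ hR hact, act_tmul_counit_of_recovery hβ hR' hact']
  · rw [← act_counit_tmul_of_recovery hβ hL hR hact,
      act_counit_tmul_of_recovery hβ hL' hR' hact']

end Correspondence

/-- for finite dimensional `(H, β)`, left `H^{*op} ⊗ H^*`-module structures on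
`(M, ζ_M)` are in bijection with `H`-bicomodule structures, recovered by the pairing formula. -/
theorem dual_modules_are_bicomodules (H : Type) [AddCommGroup H] [Module k H]
    [FiniteDimensional k H]
    (A : Hopf k H) (βe : H ≃ₗ[k] H) (hβ : βe.toLinearMap = A.bmap)
    (M : Type) [AddCommGroup M] [Module k M] (ζMe : M ≃ₗ[k] M) :
    (∀ act : (Module.Dual k H) ⊗[k] (Module.Dual k H) →ₗ[k] M →ₗ[k] M,
      IsLModOf k
          (TensorProduct.map₂ (dualMul k A βe.symm.toLinearMap).flip
            (dualMul k A βe.symm.toLinearMap))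
          (A.counit ⊗ₜ[k] A.counit)
          (TensorProduct.map (βe.symm.toLinearMap.dualMap) (βe.symm.toLinearMap.dualMap))
          ζMe.toLinearMap act →
      ∃ (ρl : M →ₗ[k] H ⊗[k] M) (ρr : M →ₗ[k] M ⊗[k] H),
        IsLCom k A.toBialg ζMe.toLinearMap ρl ∧
        IsRCom k A.toBialg ζMe.toLinearMap ρr ∧
        (∀ m, TensorProduct.map A.bmap ρr (ρl m)
          = TensorProduct.assoc k H M H (TensorProduct.map ρl A.bmap (ρr m))) ∧
        dualActCond k βe.symm.toLinearMap ζMe.symm.toLinearMap act ρl ρr) ∧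
    (∀ (ρl : M →ₗ[k] H ⊗[k] M) (ρr : M →ₗ[k] M ⊗[k] H),
      IsLCom k A.toBialg ζMe.toLinearMap ρl →
      IsRCom k A.toBialg ζMe.toLinearMap ρr →
      (∀ m, TensorProduct.map A.bmap ρr (ρl m)
        = TensorProduct.assoc k H M H (TensorProduct.map ρl A.bmap (ρr m))) →
      ∃ act : (Module.Dual k H) ⊗[k] (Module.Dual k H) →ₗ[k] M →ₗ[k] M,
        IsLModOf k
          (TensorProduct.map₂ (dualMul k A βe.symm.toLinearMap).flip
            (dualMul k A βe.symm.toLinearMap))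
          (A.counit ⊗ₜ[k] A.counit)
          (TensorProduct.map (βe.symm.toLinearMap.dualMap) (βe.symm.toLinearMap.dualMap))
          ζMe.toLinearMap act ∧
        dualActCond k βe.symm.toLinearMap ζMe.symm.toLinearMap act ρl ρr) ∧
    (∀ (act : (Module.Dual k H) ⊗[k] (Module.Dual k H) →ₗ[k] M →ₗ[k] M)
        (ρl ρl' : M →ₗ[k] H ⊗[k] M) (ρr ρr' : M →ₗ[k] M ⊗[k] H),
      IsLCom k A.toBialg ζMe.toLinearMap ρl → IsRCom k A.toBialg ζMe.toLinearMap ρr →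
      IsLCom k A.toBialg ζMe.toLinearMap ρl' → IsRCom k A.toBialg ζMe.toLinearMap ρr' →
      dualActCond k βe.symm.toLinearMap ζMe.symm.toLinearMap act ρl ρr →
      dualActCond k βe.symm.toLinearMap ζMe.symm.toLinearMap act ρl' ρr' →
      ρl = ρl' ∧ ρr = ρr') ∧
    (∀ (act act' : (Module.Dual k H) ⊗[k] (Module.Dual k H) →ₗ[k] M →ₗ[k] M)
        (ρl : M →ₗ[k] H ⊗[k] M) (ρr : M →ₗ[k] M ⊗[k] H),
      dualActCond k βe.symm.toLinearMap ζMe.symm.toLinearMap act ρl ρr →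
      dualActCond k βe.symm.toLinearMap ζMe.symm.toLinearMap act' ρl ρr →
      act = act') := by
  refine ⟨fun act hmod => exists_bicomod_of_isDualOpTensorMod hβ hmod,
    fun ρl ρr hl hr hlr => ⟨_, isDualOpTensorMod_recoveredAct hβ hl hr hlr,
      dualActCond_recoveredAct _ _ _ _⟩,
    fun act ρl ρl' ρr ρr' hl hr hl' hr' hc hc' =>
      coacts_eq_of_dualActCond hβ hl hr hl' hr' hc hc',
    fun act act' ρl ρr hc hc' =>
      TensorProduct.ext' fun x y => LinearMap.ext fun m => by rw [hc x y m, hc' x y m]⟩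

end HomHopf
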